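/- arXiv:1902.09540 — 5 statements merged into one kernel-verified Lean document; each statement's English description precedes it below -/
import Mathlib

section
/- Let $r \ge 1$ be an integer, $\beta > -1$ a real number, and define $p_n(x;\beta) = \sum_{k=0}^n \binom{n}{k} \frac{(-1)^{n-k}}{\Gamma(\frac{\beta+k}{r}+1)} x^k$. Then for every integer $j$ with $1 \le j \le n$, $\int_0^\infty x^{rj-1} p_n(x;\beta)\, x^\beta e^{-x^r}\, dx = 0$. -/
/-!
By `∫₀^∞ x^s e^{-x^r} dx = Γ((s+1)/r)/r`, the `(rj-1)`-th moment of `x^k x^β e^{-x^r}` divided by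
`Γ((β+k)/r+1)` is `(1/r)·Γ(w+j-1)/Γ(w)` with `w = (β+k)/r+1`, i.e. a rising factorial
`w(w+1)⋯(w+j-2)`: a polynomial of degree `j-1` in `k`. Pairing with the coefficients
`(-1)^{n-k} C(n,k)` of `p_n` takes an `n`-th forward difference of that polynomial, which vanishes
because `j-1 < n`.
-/

/-- The polynomial `p_n(x; β)` for the Laguerre-Angelesco polynomials on an `r`-star. -/
noncomputable def laPoly (r n : ℕ) (β : ℝ) (x : ℝ) : ℝ :=
  ∑ k ∈ Finset.range (n + 1),
    (n.choose k : ℝ) * (-1) ^ (n - k) / Real.Gamma ((β + k) / r + 1) * x ^ k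

open Finset Polynomial MeasureTheory Real Set

theorem Polynomial.sum_range_neg_one_pow_mul_choose_mul_eval_eq_zero {R : Type*} [CommRing R]
    {P : R[X]} {n : ℕ} (hP : P.natDegree < n) :
    ∑ k ∈ range (n + 1), (-1 : R) ^ (n - k) * n.choose k * P.eval (k : R) = 0 := by
  have h := fwdDiff_iter_eq_sum_shift (1 : R) P.eval n 0
  rw [fwdDiff_iter_eq_zero_of_degree_lt hP, Pi.zero_apply] at h
  simpa [zsmul_eq_mul] using h.symm

theorem Real.Gamma_add_nat_eq_ascPochhammer_eval_mul {w : ℝ} (hw : ∀ k : ℕ, w ≠ -k) (m : ℕ) :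
    Gamma (w + m) = (ascPochhammer ℝ m).eval w * Gamma w := by
  induction m with
  | zero => simp
  | succ m ih =>
    have hwm : w + m ≠ 0 := fun h => hw m (by linarith)
    rw [Nat.cast_succ, ← add_assoc, Gamma_add_one hwm, ih, ascPochhammer_succ_right]
    simp only [eval_mul, eval_add, eval_X, eval_natCast]
    ring

theorem integral_pow_mul_laPoly_mul_weight {r : ℕ} (hr : 0 < r) (n : ℕ) {β : ℝ} (hβ : -1 < β)
    (m : ℕ) :
    ∫ x in Ioi (0 : ℝ), x ^ m * laPoly r n β x * x ^ β * exp (-(x ^ r)) =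
      ∑ k ∈ range (n + 1), (n.choose k : ℝ) * (-1) ^ (n - k) / Gamma ((β + k) / r + 1) *
        (1 / r * Gamma ((β + k + m + 1) / r)) := by
  have hr' : (0 : ℝ) < r := by exact_mod_cast hr
  have hexp (k : ℕ) : -1 < β + k + m := by linarith [(by positivity : (0 : ℝ) ≤ k + m)]
  have hterm : ∀ x ∈ Ioi (0 : ℝ), x ^ m * laPoly r n β x * x ^ β * exp (-(x ^ r)) =
      ∑ k ∈ range (n + 1), (n.choose k : ℝ) * (-1) ^ (n - k) / Gamma ((β + k) / r + 1) *
        (x ^ (β + k + m) * exp (-x ^ (r : ℝ))) := by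
    intro x hx
    rw [laPoly, mul_sum, sum_mul, sum_mul]
    refine sum_congr rfl fun k _ => ?_
    rw [add_assoc, rpow_add hx, ← Nat.cast_add, rpow_natCast, rpow_natCast, pow_add]
    ring
  rw [setIntegral_congr_fun measurableSet_Ioi hterm, integral_finsetSum]
  · refine sum_congr rfl fun k _ => ?_
    rw [integral_const_mul, integral_rpow_mul_exp_neg_rpow hr' (hexp k)]
  · exact fun k _ => (integrableOn_rpow_mul_exp_neg_rpow (hexp k) hr').const_mul _

theorem Gamma_div_Gamma_eq_ascPochhammer_eval {r : ℕ} (hr : 0 < r) {a : ℝ} (ha : -1 < a)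
    (i : ℕ) :
    Gamma ((a + (r * (i + 1) - 1 : ℕ) + 1) / r) / Gamma (a / r + 1) =
      (ascPochhammer ℝ i).eval (a / r + 1) := by
  have hr' : (1 : ℝ) ≤ r := by exact_mod_cast hr
  have hw : 0 < a / r + 1 := by
    rw [div_add_one (by positivity)]
    exact div_pos (by linarith) (by positivity)
  have harg : (a + (r * (i + 1) - 1 : ℕ) + 1) / r = (a / r + 1) + i := by
    rw [Nat.cast_sub (by nlinarith)]
    push_cast
    field_simp
    ring
  have hw' (l : ℕ) : a / r + 1 ≠ -l := by linarith [l.cast_nonneg' (α := ℝ)]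
  rw [harg, Gamma_add_nat_eq_ascPochhammer_eval_mul hw',
    mul_div_cancel_right₀ _ (Gamma_pos_of_pos hw).ne']

theorem stmt_3 (r n : ℕ) (hr : 1 ≤ r) (β : ℝ) (hβ : β > -1) (j : ℕ) (hj1 : 1 ≤ j)
    (hjn : j ≤ n) :
    ∫ x in Set.Ioi (0 : ℝ),
      x ^ (r * j - 1) * laPoly r n β x * x ^ β * Real.exp (-(x ^ r)) = 0 := by
  obtain ⟨i, rfl⟩ : ∃ i, j = i + 1 := ⟨j - 1, by omega⟩
  set P : ℝ[X] := (ascPochhammer ℝ i).comp (C (1 / r : ℝ) * X + C (β / r + 1))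
  have hP : P.natDegree < n := calc
    P.natDegree ≤ i * 1 :=
      natDegree_comp_le.trans <|
        Nat.mul_le_mul (ascPochhammer_natDegree ℝ i).le natDegree_linear_le
    _ < n := by omega
  have hPk (k : ℕ) : P.eval (k : ℝ) = (ascPochhammer ℝ i).eval ((β + k) / r + 1) := by
    simp only [P, eval_comp, eval_add, eval_mul, eval_C, eval_X]
    congr 1
    ring
  calc _ = 1 / r * ∑ k ∈ range (n + 1), (-1 : ℝ) ^ (n - k) * n.choose k * P.eval (k : ℝ) := by
        rw [integral_pow_mul_laPoly_mul_weight hr n hβ, mul_sum]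
        refine sum_congr rfl fun k _ => ?_
        have hk : -1 < β + k := by linarith [k.cast_nonneg' (α := ℝ)]
        rw [hPk, ← Gamma_div_Gamma_eq_ascPochhammer_eval hr hk]
        ring
    _ = 0 := by rw [P.sum_range_neg_one_pow_mul_choose_mul_eval_eq_zero hP, mul_zero]
end

section
/- Let $r \ge 1$ be an integer, $\beta > -1$ a real number, and define $p_n(x;\beta) = \sum_{k=0}^n \binom{n}{k} \frac{(-1)^{n-k}}{\Gamma(\frac{\beta+k}{r}+1)} x^k$. Then $\int_0^\infty x^{rn+r-1} p_n(x;\beta)\, x^\beta e^{-x^r}\, dx = \frac{n!}{r^{n+1}}$. -/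
/-!
Expanding `p_n`, the `k`-th term of the integral is
`(-1)^(n-k) (n choose k) Γ(z_k + n) / (r Γ(z_k))` with `z_k = (β + k)/r + 1`, and
`Γ(z_k + n)/Γ(z_k) = (z_k)_n` is a polynomial of degree `n` in `k` with leading coefficient
`r^(-n)`. The alternating binomial sum is the `n`-th forward difference at `0`, which on a
polynomial of degree `n` is `n!` times its leading coefficient.
-/

open Finset Polynomial MeasureTheory Set Real

theorem Polynomial.sum_range_alternating_choose_mul_eval {R : Type*} [CommRing R] {P : R[X]}
    {n : ℕ} (hP : P.natDegree ≤ n) :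
    ∑ k ∈ range (n + 1), (-1 : R) ^ (n - k) * n.choose k * P.eval (k : R) =
      n.factorial * P.coeff n := by
  have h := fwdDiff_iter_eq_sum_shift (1 : R) P.eval n 0
  simp only [zero_add, nsmul_one, zsmul_eq_mul, Int.cast_mul, Int.cast_pow, Int.cast_neg,
    Int.cast_one, Int.cast_natCast] at h
  rw [← h]
  rcases hP.lt_or_eq with hlt | rfl
  · simp [fwdDiff_iter_eq_zero_of_degree_lt hlt, coeff_eq_zero_of_natDegree_lt hlt]
  · simp [fwdDiff_iter_degree_eq_factorial, mul_comm]

theorem sum_range_alternating_choose_mul_ascPochhammer_eval {R : Type*} [CommRing R]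
    [IsDomain R] {a : R} (ha : a ≠ 0) (b : R) (n : ℕ) :
    ∑ k ∈ range (n + 1),
        (-1 : R) ^ (n - k) * n.choose k * (ascPochhammer R n).eval (a * k + b) =
      n.factorial * a ^ n := by
  set P := (ascPochhammer R n).comp (C a * X + C b)
  have hlin : (C a * X + C b).natDegree = 1 := natDegree_linear ha
  have hdeg : P.natDegree = n := by
    rw [natDegree_comp, hlin, ascPochhammer_natDegree, mul_one]
  have hcoeff : P.coeff n = a ^ n := by
    rw [← hdeg, ← leadingCoeff, leadingCoeff_comp (by rw [hlin]; exact one_ne_zero),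
      (monic_ascPochhammer R n).leadingCoeff, leadingCoeff_linear ha, ascPochhammer_natDegree,
      one_mul, hdeg]
  rw [← hcoeff, ← sum_range_alternating_choose_mul_eval hdeg.le]
  simp [P, eval_comp]

theorem Real.Gamma_add_nat_eq_mul_ascPochhammer {x : ℝ} (hx : ∀ k : ℕ, x ≠ -k) (n : ℕ) :
    Gamma (x + n) = Gamma x * (ascPochhammer ℝ n).eval x := by
  induction n with
  | zero => simp
  | succ n ih =>
    have hxn : x + n ≠ 0 := fun h => hx n (by linarith)
    rw [Nat.cast_succ, ← add_assoc, Gamma_add_one hxn, ih, ascPochhammer_succ_eval]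
    ring

theorem integrableOn_rpow_mul_exp_neg_pow {r : ℕ} (hr : 0 < r) {q : ℝ} (hq : -1 < q) :
    IntegrableOn (fun x : ℝ => x ^ q * exp (-(x ^ r))) (Ioi 0) := by
  simpa only [rpow_natCast] using integrableOn_rpow_mul_exp_neg_rpow hq (Nat.cast_pos.2 hr)

theorem integral_rpow_mul_exp_neg_pow {r : ℕ} (hr : 0 < r) {q : ℝ} (hq : -1 < q) :
    ∫ x in Ioi (0 : ℝ), x ^ q * exp (-(x ^ r)) = Gamma ((q + 1) / r) / r := by
  simpa only [rpow_natCast, one_div, inv_mul_eq_div]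
    using integral_rpow_mul_exp_neg_rpow (Nat.cast_pos.2 hr) hq

section laPoly

variable {r : ℕ} (n : ℕ) (β : ℝ)

theorem laPoly_moment_integrand_eq {x : ℝ} (hx : 0 < x) :
    x ^ (r * n + r - 1) * laPoly r n β x * x ^ β * exp (-(x ^ r)) =
      ∑ k ∈ range (n + 1), (n.choose k : ℝ) * (-1) ^ (n - k) / Gamma ((β + k) / r + 1) *
        (x ^ (β + ((r * n + r - 1 + k : ℕ) : ℝ)) * exp (-(x ^ r))) := by
  rw [laPoly, mul_sum, sum_mul, sum_mul]
  refine sum_congr rfl fun k _ => ?_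
  rw [rpow_add hx, rpow_natCast, pow_add]
  ring

theorem laPoly_Gamma_arg_pos (hr : 1 ≤ r) (hβ : -1 < β) (k : ℕ) : 0 < (β + k) / r + 1 := by
  have hr' : (1 : ℝ) ≤ r := by exact_mod_cast hr
  have : -1 < (β + k) / r := by
    rw [lt_div_iff₀ (by positivity)]
    linarith [(Nat.cast_nonneg k : (0 : ℝ) ≤ k)]
  linarith

theorem integral_moment_eq_Gamma_mul_ascPochhammer (hr : 1 ≤ r) (hβ : -1 < β) (k : ℕ) :
    ∫ x in Ioi (0 : ℝ), x ^ (β + ((r * n + r - 1 + k : ℕ) : ℝ)) * exp (-(x ^ r)) =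
      Gamma ((β + k) / r + 1) * (ascPochhammer ℝ n).eval ((β + k) / r + 1) / r := by
  have hr' : (0 : ℝ) < r := by exact_mod_cast hr
  have hexp : (β + ((r * n + r - 1 + k : ℕ) : ℝ) + 1) / r = (β + k) / r + 1 + n := by
    push_cast [Nat.cast_sub (by nlinarith : 1 ≤ r * n + r)]
    field_simp
    ring
  have hz := laPoly_Gamma_arg_pos β hr hβ k
  rw [integral_rpow_mul_exp_neg_pow hr
    (by linarith [(Nat.cast_nonneg _ : (0 : ℝ) ≤ ((r * n + r - 1 + k : ℕ) : ℝ))]), hexp,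
    Gamma_add_nat_eq_mul_ascPochhammer fun j hj => ?_]
  linarith [(Nat.cast_nonneg j : (0 : ℝ) ≤ j)]

end laPoly

theorem stmt_4 (r n : ℕ) (hr : 1 ≤ r) (β : ℝ) (hβ : β > -1) :
    ∫ x in Set.Ioi (0 : ℝ),
      x ^ (r * n + r - 1) * laPoly r n β x * x ^ β * Real.exp (-(x ^ r))
      = (n.factorial : ℝ) / r ^ (n + 1) := by
  have hterm : ∀ k ∈ range (n + 1),
      ∫ x in Ioi (0 : ℝ), (n.choose k : ℝ) * (-1) ^ (n - k) / Gamma ((β + k) / r + 1) *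
        (x ^ (β + ((r * n + r - 1 + k : ℕ) : ℝ)) * exp (-(x ^ r))) =
      (r : ℝ)⁻¹ * ((-1) ^ (n - k) * n.choose k *
        (ascPochhammer ℝ n).eval ((r : ℝ)⁻¹ * k + (β / r + 1))) := by
    intro k _
    rw [integral_const_mul, integral_moment_eq_Gamma_mul_ascPochhammer n β hr hβ k]
    have hG := (Gamma_pos_of_pos (laPoly_Gamma_arg_pos β hr hβ k)).ne'
    have hz : (β + k) / r + 1 = (r : ℝ)⁻¹ * k + (β / r + 1) := by ring
    rw [← hz]
    generalize Gamma ((β + k) / r + 1) = G at hG ⊢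
    field_simp
  rw [setIntegral_congr_fun measurableSet_Ioi fun x hx => laPoly_moment_integrand_eq n β hx,
    integral_finsetSum _ fun k _ => (integrableOn_rpow_mul_exp_neg_pow hr (by
      linarith [(Nat.cast_nonneg _ : (0 : ℝ) ≤ ((r * n + r - 1 + k : ℕ) : ℝ))])).const_mul _,
    sum_congr rfl hterm, ← mul_sum,
    sum_range_alternating_choose_mul_ascPochhammer_eval (inv_ne_zero (by positivity)),
    inv_pow, pow_succ']
  field_simp
end

section
/- Let $r \ge 1$, $\beta > 0$, and $p_n(x;\beta)$ as defined. Then the raising relation holds: $\frac{d}{dx}\left[x^\beta e^{-x^r} p_n(x;\beta)\right] = x^{\beta-1} e^{-x^r} \sum_{k=1}^r (-1)^k \binom{r}{k}\, r\, x^{r-k}\, p_{n+k}(x;\beta-k)$ for all $x > 0$. -/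
open Finset Real

/-!
The derivative equals `x^(β-1) e^(-x^r) (β p + x p' - r x^r p)` with `p = p_n(x; β)`.
Termwise, `Γ(z + 1) = z Γ(z)` turns `β p + x p'` into `r p_n(x; β - r)`. On the other side, the
Pascal rule gives `p_{n+1}(x; β-1) = x p_n(x; β) - p_n(x; β-1)`: in terms of the commuting shifts
`A : (n, β) ↦ (n+1, β-1)` and `B : (n, β) ↦ (n, β-1)` this says `B p = (x - A) p`, so
`p_n(x; β-s) = Bˢ p = (x - A)ˢ p = ∑ₖ (-1)ᵏ C(s,k) x^(s-k) p_{n+k}(x; β-k)`. For `s = r` the terms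
with `k ≥ 1` therefore add up to `p_n(x; β-r) - x^r p_n(x; β)`.
-/

lemma Real.div_Gamma_div_add_one {a r : ℝ} (ha : a ≠ 0) (hr : r ≠ 0) :
    a / Gamma (a / r + 1) = r / Gamma (a / r) := by
  rw [Gamma_add_one (div_ne_zero ha hr), ← div_div, div_div_cancel₀ ha]

lemma sum_neg_one_pow_choose_mul_of_recurrence {R : Type*} [CommRing R] (f : ℕ → ℝ → R)
    (x : R) (hf : ∀ n β, f (n + 1) (β - 1) = x * f n β - f n (β - 1)) (s n : ℕ) (β : ℝ) :
    ∑ k ∈ range (s + 1), (-1) ^ k * s.choose k * x ^ (s - k) * f (n + k) (β - k)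
      = f n (β - s) := by
  induction s generalizing n β with
  | zero => simp
  | succ s ih =>
    have hsplit := sum_choose_succ_mul (fun i j => (-1) ^ i * x ^ j * f (n + i) (β - i)) s
    have hlow : ∑ i ∈ range (s + 1),
          (s.choose i : R) * ((-1) ^ i * x ^ (s + 1 - i) * f (n + i) (β - i))
        = x * f n (β - s) := by
      rw [← ih, mul_sum]
      refine sum_congr rfl fun i hi => ?_
      rw [Nat.sub_add_comm (Nat.lt_succ_iff.mp (mem_range.mp hi)), pow_succ]
      ring
    have hhigh : ∑ i ∈ range (s + 1), (s.choose i : R)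
          * ((-1) ^ (i + 1) * x ^ (s - i) * f (n + (i + 1)) (β - (i + 1 : ℕ)))
        = -f (n + 1) (β - 1 - s) := by
      rw [← ih, ← sum_neg_distrib]
      refine sum_congr rfl fun i _ => ?_
      rw [show n + (i + 1) = n + 1 + i by ring,
        show β - (i + 1 : ℕ) = β - 1 - i by push_cast; ring]
      ring
    calc ∑ k ∈ range (s + 1 + 1), (-1) ^ k * ((s + 1).choose k : R) * x ^ (s + 1 - k)
            * f (n + k) (β - k)
        = x * f n (β - s) - f (n + 1) (β - s - 1) := by
          rw [sub_right_comm, ← hlow, sub_eq_add_neg, ← hhigh, ← hsplit]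
          exact sum_congr rfl fun k _ => by ring
      _ = f n (β - (s + 1 : ℕ)) := by rw [Nat.cast_succ, ← sub_sub, hf]; ring

section

variable (r : ℕ)

lemma laPoly_succ_sub_one (n : ℕ) (β x : ℝ) :
    laPoly r (n + 1) (β - 1) x = x * laPoly r n β x - laPoly r n (β - 1) x := by
  have hsplit := sum_choose_succ_mul
    (fun i j => (-1) ^ j / Gamma ((β - 1 + i) / r + 1) * x ^ i) n
  have hlow : ∑ i ∈ range (n + 1), (n.choose i : ℝ)
        * ((-1) ^ (n + 1 - i) / Gamma ((β - 1 + i) / r + 1) * x ^ i)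
      = -laPoly r n (β - 1) x := by
    rw [laPoly, ← sum_neg_distrib]
    refine sum_congr rfl fun i hi => ?_
    rw [Nat.sub_add_comm (Nat.lt_succ_iff.mp (mem_range.mp hi)), pow_succ]
    ring
  have hhigh : ∑ i ∈ range (n + 1), (n.choose i : ℝ)
        * ((-1) ^ (n - i) / Gamma ((β - 1 + (i + 1 : ℕ)) / r + 1) * x ^ (i + 1))
      = x * laPoly r n β x := by
    rw [laPoly, mul_sum]
    refine sum_congr rfl fun i _ => ?_
    rw [show β - 1 + (i + 1 : ℕ) = β + i by push_cast; ring, pow_succ]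
    ring
  calc laPoly r (n + 1) (β - 1) x
      = ∑ i ∈ range (n + 2),
          ((n + 1).choose i : ℝ) * ((-1) ^ (n + 1 - i) / Gamma ((β - 1 + i) / r + 1) * x ^ i) :=
        sum_congr rfl fun k _ => by ring
    _ = x * laPoly r n β x - laPoly r n (β - 1) x := by rw [hsplit, hlow, hhigh]; ring

lemma sum_Icc_neg_one_pow_choose_mul_laPoly (s n : ℕ) (β x : ℝ) :
    ∑ k ∈ Icc 1 s, (-1) ^ k * s.choose k * x ^ (s - k) * laPoly r (n + k) (β - k) x
      = laPoly r n (β - s) x - x ^ s * laPoly r n β x := by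
  have hfull := sum_neg_one_pow_choose_mul_of_recurrence (fun m γ => laPoly r m γ x) x
    (fun m γ => laPoly_succ_sub_one r m γ x) s n β
  rw [range_eq_Ico, sum_eq_sum_Ico_succ_bot (by omega : 0 < s + 1), zero_add,
    Ico_add_one_right_eq_Icc] at hfull
  simp only [pow_zero, Nat.choose_zero_right, Nat.cast_one, Nat.sub_zero, add_zero,
    CharP.cast_eq_zero, sub_zero, one_mul] at hfull
  linarith

lemma hasDerivAt_laPoly (n : ℕ) (β x : ℝ) :
    HasDerivAt (laPoly r n β)
      (∑ k ∈ range (n + 1),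
        (n.choose k : ℝ) * (-1) ^ (n - k) / Gamma ((β + k) / r + 1) * (k * x ^ (k - 1))) x :=
  HasDerivAt.fun_sum fun k _ => (hasDerivAt_pow k x).const_mul _

lemma mul_laPoly_add_mul_deriv_laPoly (hr : r ≠ 0) (n : ℕ) {β : ℝ} (hβ : 0 < β) (x : ℝ) :
    β * laPoly r n β x + x * deriv (laPoly r n β) x = r * laPoly r n (β - r) x := by
  rw [(hasDerivAt_laPoly r n β x).deriv, laPoly, laPoly, mul_sum, mul_sum, mul_sum,
    ← sum_add_distrib]
  refine sum_congr rfl fun k _ => ?_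
  have hβk : β + k ≠ 0 := by positivity
  have hcoeff := div_Gamma_div_add_one hβk (Nat.cast_ne_zero.mpr hr)
  have hmono : x * (k * x ^ (k - 1)) = k * x ^ k := by
    rcases k.eq_zero_or_pos with rfl | hk
    · simp
    · rw [mul_left_comm, mul_pow_sub_one hk.ne']
  rw [show (β - r + k) / r + 1 = (β + k) / r by field_simp; ring]
  linear_combination (n.choose k : ℝ) * (-1) ^ (n - k) / Gamma ((β + k) / r + 1) * hmono
    + (n.choose k : ℝ) * (-1) ^ (n - k) * x ^ k * hcoeff

lemma hasDerivAt_rpow_mul_laPoly (hr : r ≠ 0) (n : ℕ) {β x : ℝ} (hβ : 0 < β) (hx : 0 < x) :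
    HasDerivAt (fun t => t ^ β * laPoly r n β t) (r * x ^ (β - 1) * laPoly r n (β - r) x) x := by
  refine ((hasDerivAt_rpow_const (p := β) (Or.inl hx.ne')).fun_mul
    (hasDerivAt_laPoly r n β x)).congr_deriv ?_
  have hxβ : x ^ β = x ^ (β - 1) * x := by rw [← rpow_add_one hx.ne', sub_add_cancel]
  rw [← (hasDerivAt_laPoly r n β x).deriv]
  linear_combination x ^ (β - 1) * mul_laPoly_add_mul_deriv_laPoly r hr n hβ x
    + deriv (laPoly r n β) x * hxβ

end

theorem stmt_10 (r n : ℕ) (hr : 1 ≤ r) (β : ℝ) (hβ : β > 0) (x : ℝ) (hx : 0 < x) :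
    deriv (fun t : ℝ => t ^ β * Real.exp (-(t ^ r)) * laPoly r n β t) x
      = x ^ (β - 1) * Real.exp (-(x ^ r)) *
        ∑ k ∈ Finset.Icc 1 r,
          (-1 : ℝ) ^ k * (r.choose k) * r * x ^ (r - k) * laPoly r (n + k) (β - k) x := by
  have hderiv := (hasDerivAt_rpow_mul_laPoly r (by omega) n hβ hx).fun_mul
    (hasDerivAt_pow r x).fun_neg.exp
  have hsum := sum_Icc_neg_one_pow_choose_mul_laPoly r r n β x
  have hpow : x ^ (r - 1) * x = x ^ r := pow_sub_one_mul (by omega) x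
  have hxβ : x ^ β = x ^ (β - 1) * x := by rw [← rpow_add_one hx.ne', sub_add_cancel]
  rw [show (fun t : ℝ => t ^ β * exp (-(t ^ r)) * laPoly r n β t)
      = fun t => t ^ β * laPoly r n β t * exp (-(t ^ r)) by funext t; ring, hderiv.deriv]
  calc _ = x ^ (β - 1) * exp (-(x ^ r))
          * (r * (laPoly r n (β - r) x - x ^ r * laPoly r n β x)) := by
        linear_combination -(r * laPoly r n β x * exp (-(x ^ r)) * x ^ (r - 1)) * hxβ
          - r * laPoly r n β x * exp (-(x ^ r)) * x ^ (β - 1) * hpow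
    _ = _ := by
      rw [← hsum, mul_sum]
      congr 1
      exact sum_congr rfl fun k _ => by ring
end

section
/- Let $r \ge 1$, $\beta > -1$, and define for the diagonal multi-index $\vec{n} = (n,\dots,n)$ the polynomial $L_{\vec{n}}(x;\beta)$ by the Rodrigues formula $x^\beta e^{-x^r} L_{\vec{n}}(x;\beta) = \frac{(-1)^n}{r^n} \frac{d^n}{dx^n}\left[x^{\beta+n} e^{-x^r}\right]$ for $x>0$. Then $L_{\vec{n}}(x;\beta) = \frac{(-1)^n}{r^n} \sum_{\ell=0}^n \frac{x^{r\ell}}{\ell!} \sum_{k=0}^\ell \binom{\ell}{k} (rk+\beta+1)_n (-1)^k$. -/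
/-!
For `t > 0`, `d/dt [t^(γ+1) e^(-t^r)] = (γ+1) t^γ e^(-t^r) - r t^(γ+r) e^(-t^r)`. Applying this once and
then the induction hypothesis at `β` and at `β + r` shows that the `n`-th Rodrigues derivative is
`x^β e^(-x^r) ∑_ℓ x^(rℓ)/ℓ! A_n(β, ℓ)` for coefficients obeying
`A_{n+1}(β, ℓ) = (β+n+1) A_n(β, ℓ) - rℓ A_n(β+r, ℓ-1)`. The binomial sums of the claim satisfy this
recursion (absorb the factor `rk + β + 1 + n` of the Pochhammer symbol and use `k C(ℓ,k) = ℓ C(ℓ-1,k-1)`),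
and they vanish for `ℓ > n`, so the sum over `ℓ` never needs more than `n + 1` terms.
-/

open Finset Real
open scoped Nat

noncomputable def rodriguesCoeff (c β : ℝ) (n ℓ : ℕ) : ℝ :=
  ∑ k ∈ range (ℓ + 1), (ℓ.choose k : ℝ) * (ascPochhammer ℝ n).eval (c * k + β + 1) * (-1) ^ k

theorem sum_range_mul_choose_mul_neg_one_pow (m : ℕ) (f : ℕ → ℝ) :
    ∑ k ∈ range (m + 2), (k : ℝ) * ((m + 1).choose k : ℝ) * f k * (-1) ^ k
      = -((m + 1 : ℝ) * ∑ j ∈ range (m + 1), (m.choose j : ℝ) * f (j + 1) * (-1) ^ j) := by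
  rw [sum_range_succ', mul_sum, ← sum_neg_distrib]
  simp only [CharP.cast_eq_zero, zero_mul, add_zero]
  refine sum_congr rfl fun j _ => ?_
  have h := congrArg (Nat.cast (R := ℝ)) (Nat.add_one_mul_choose_eq m j)
  push_cast at h ⊢
  rw [pow_succ]
  linear_combination (f (j + 1) * (-1) ^ j) * h

theorem rodriguesCoeff_succ (c β : ℝ) (n ℓ : ℕ) :
    rodriguesCoeff c β (n + 1) ℓ
      = (β + n + 1) * rodriguesCoeff c β n ℓ - c * ℓ * rodriguesCoeff c (β + c) n (ℓ - 1) := by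
  have hsplit : rodriguesCoeff c β (n + 1) ℓ = (β + n + 1) * rodriguesCoeff c β n ℓ
      + c * ∑ k ∈ range (ℓ + 1),
          (k : ℝ) * (ℓ.choose k : ℝ) * (ascPochhammer ℝ n).eval (c * k + β + 1) * (-1) ^ k := by
    simp only [rodriguesCoeff, mul_sum, ← sum_add_distrib, ascPochhammer_succ_eval]
    exact sum_congr rfl fun k _ => by ring
  rw [hsplit]
  rcases ℓ with _ | m
  · simp
  · have hshift : ∀ j : ℕ, c * ↑(j + 1) + β + 1 = c * j + (β + c) + 1 := fun j => by
      push_cast; ring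
    rw [sum_range_mul_choose_mul_neg_one_pow, Nat.add_sub_cancel]
    unfold rodriguesCoeff
    simp only [hshift]
    push_cast
    ring

theorem rodriguesCoeff_eq_zero_of_lt (c : ℝ) {n ℓ : ℕ} (h : n < ℓ) (β : ℝ) :
    rodriguesCoeff c β n ℓ = 0 := by
  induction n generalizing β ℓ with
  | zero =>
    have h := congrArg (Int.cast (R := ℝ)) (Int.alternating_sum_range_choose_of_ne h.ne')
    push_cast at h
    rw [← h, rodriguesCoeff]
    exact sum_congr rfl fun k _ => by simp [mul_comm]
  | succ n ih =>
    rw [rodriguesCoeff_succ, ih (by omega), ih (by omega)]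
    ring

noncomputable def rodriguesPoly (r : ℕ) (β : ℝ) (n : ℕ) (x : ℝ) : ℝ :=
  ∑ ℓ ∈ range (n + 1), x ^ (r * ℓ) / ℓ ! * rodriguesCoeff r β n ℓ

theorem rodriguesPoly_succ (r : ℕ) (β : ℝ) (n : ℕ) (x : ℝ) :
    rodriguesPoly r β (n + 1) x
      = (β + n + 1) * rodriguesPoly r β n x - r * x ^ r * rodriguesPoly r (β + r) n x := by
  simp only [rodriguesPoly, rodriguesCoeff_succ, mul_sub, sum_sub_distrib, mul_sum]
  congr 1
  · rw [sum_range_succ, rodriguesCoeff_eq_zero_of_lt _ (Nat.lt_succ_self n)]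
    rw [mul_zero, mul_zero, add_zero]
    exact sum_congr rfl fun ℓ _ => by ring
  · rw [sum_range_succ']
    simp only [Nat.cast_zero, mul_zero, zero_mul, add_zero]
    refine sum_congr rfl fun j _ => ?_
    rw [Nat.factorial_succ, Nat.add_sub_cancel, mul_add_one, pow_add]
    have hj : (j ! : ℝ) ≠ 0 := by positivity
    push_cast
    field_simp

theorem hasDerivAt_rpow_add_one_mul_exp_neg_pow (r : ℕ) (γ : ℝ) {t : ℝ} (ht : 0 < t) :
    HasDerivAt (fun s => s ^ (γ + 1) * exp (-(s ^ r)))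
      ((γ + 1) * (t ^ γ * exp (-(t ^ r))) - r * (t ^ (γ + r) * exp (-(t ^ r)))) t := by
  have hpow : HasDerivAt (fun s => s ^ (γ + 1)) ((γ + 1) * t ^ γ) t := by
    simpa using Real.hasDerivAt_rpow_const (p := γ + 1) (Or.inl ht.ne')
  have hexp : HasDerivAt (fun s => exp (-(s ^ r))) (exp (-(t ^ r)) * -(r * t ^ (r - 1))) t :=
    (hasDerivAt_pow r t).neg.exp
  have hmonomial : (r : ℝ) * t ^ (r - 1) * t ^ (γ + 1) = r * t ^ (γ + r) := by
    rcases r with _ | m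
    · simp
    · rw [Nat.add_sub_cancel, ← rpow_natCast, mul_assoc, ← rpow_add ht]
      push_cast
      ring_nf
  refine (hpow.mul hexp).congr_deriv ?_
  linear_combination -exp (-(t ^ r)) * hmonomial

theorem contDiffAt_rpow_mul_exp_neg_pow (r : ℕ) (γ : ℝ) {t : ℝ} (ht : 0 < t) (n : ℕ) :
    ContDiffAt ℝ n (fun s => s ^ γ * exp (-(s ^ r))) t :=
  (contDiffAt_rpow_const_of_ne ht.ne').mul (contDiff_id.pow r).neg.exp.contDiffAt

theorem iteratedDeriv_rpow_mul_exp_neg_pow (r n : ℕ) (β : ℝ) {x : ℝ} (hx : 0 < x) :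
    iteratedDeriv n (fun t => t ^ (β + n) * exp (-(t ^ r))) x
      = x ^ β * exp (-(x ^ r)) * rodriguesPoly r β n x := by
  induction n generalizing β with
  | zero => simp [rodriguesPoly, rodriguesCoeff]
  | succ n ih =>
    have hderiv : deriv (fun t => t ^ (β + ↑(n + 1)) * exp (-(t ^ r))) =ᶠ[nhds x]
        fun t => (β + n + 1) * (t ^ (β + n) * exp (-(t ^ r)))
          - r * (t ^ (β + r + n) * exp (-(t ^ r))) := by
      filter_upwards [Ioi_mem_nhds hx] with t ht
      have h := hasDerivAt_rpow_add_one_mul_exp_neg_pow r (β + n) ht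
      rw [Nat.cast_succ, ← add_assoc, h.deriv, add_right_comm β (n : ℝ) (r : ℝ)]
    rw [iteratedDeriv_succ', hderiv.iteratedDeriv_eq,
      iteratedDeriv_fun_sub (contDiffAt_const.mul (contDiffAt_rpow_mul_exp_neg_pow r _ hx n))
        (contDiffAt_const.mul (contDiffAt_rpow_mul_exp_neg_pow r _ hx n)),
      iteratedDeriv_const_mul_field, iteratedDeriv_const_mul_field, ih, ih, rodriguesPoly_succ,
      rpow_add hx, rpow_natCast]
    ring

theorem stmt_12_general (r n : ℕ) (β : ℝ) (L : ℝ → ℝ)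
    (hL : ∀ x : ℝ, 0 < x →
      x ^ β * Real.exp (-(x ^ r)) * L x
        = ((-1 : ℝ) ^ n / r ^ n) *
            iteratedDeriv n (fun t : ℝ => t ^ (β + n) * Real.exp (-(t ^ r))) x) :
    ∀ x : ℝ, 0 < x →
      L x = ((-1 : ℝ) ^ n / r ^ n) *
        ∑ ℓ ∈ Finset.range (n + 1), x ^ (r * ℓ) / (ℓ.factorial : ℝ) *
          ∑ k ∈ Finset.range (ℓ + 1),
            (ℓ.choose k : ℝ) * (ascPochhammer ℝ n).eval ((r : ℝ) * k + β + 1) * (-1) ^ k := by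
  intro x hx
  have hweight : x ^ β * exp (-(x ^ r)) ≠ 0 := by positivity
  apply mul_left_cancel₀ hweight
  rw [hL x hx, iteratedDeriv_rpow_mul_exp_neg_pow r n β hx]
  unfold rodriguesPoly rodriguesCoeff
  ring

theorem stmt_12 (r n : ℕ) (hr : 1 ≤ r) (β : ℝ) (hβ : β > -1) (L : ℝ → ℝ)
    (hL : ∀ x : ℝ, 0 < x →
      x ^ β * Real.exp (-(x ^ r)) * L x
        = ((-1 : ℝ) ^ n / r ^ n) *
            iteratedDeriv n (fun t : ℝ => t ^ (β + n) * Real.exp (-(t ^ r))) x) :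
    ∀ x : ℝ, 0 < x →
      L x = ((-1 : ℝ) ^ n / r ^ n) *
        ∑ ℓ ∈ Finset.range (n + 1), x ^ (r * ℓ) / (ℓ.factorial : ℝ) *
          ∑ k ∈ Finset.range (ℓ + 1),
            (ℓ.choose k : ℝ) * (ascPochhammer ℝ n).eval ((r : ℝ) * k + β + 1) * (-1) ^ k :=
  stmt_12_general r n β L hL
end

section
/- Let $r \ge 1$ and $\beta > 0$, and let $L_{n\vec{1}}(x;\beta)$ denote the diagonal type II Laguerre-Angelesco polynomial given by $x^\beta e^{-x^r} L_{n\vec{1}}(x;\beta) = \frac{(-1)^n}{r^n}\frac{d^n}{dx^n}[x^{\beta+n} e^{-x^r}]$. Then the raising relation holds: $\frac{d}{dx}\left[x^\beta e^{-x^r} L_{n\vec{1}}(x;\beta)\right] = -r\, x^{\beta-1} e^{-x^r}\, L_{(n+1)\vec{1}}(x;\beta-1)$ for all $x > 0$. -/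
/-!
By the Rodrigues formula, the weighted polynomial `x^β e^{-x^r} L_{n1}(x;β)` is `(-1)^n/r^n`
times the `n`-th derivative of `x^{β+n} e^{-x^r}`, while `x^{β-1} e^{-x^r} L_{(n+1)1}(x;β-1)` is
`(-1)^{n+1}/r^{n+1}` times the `(n+1)`-th derivative of the same function, since
`(β-1)+(n+1) = β+n`. Differentiating the first expression once therefore gives `-r` times the
second; no smoothness is needed because `iteratedDeriv (n+1) f = deriv (iteratedDeriv n f)`.
-/

open Filter Topology

noncomputable def rodrigues {𝕜 : Type*} [NontriviallyNormedField 𝕜] (c : 𝕜) (n : ℕ)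
    (f : 𝕜 → 𝕜) (x : 𝕜) : 𝕜 :=
  (-1) ^ n / c ^ n * iteratedDeriv n f x

theorem deriv_rodrigues {𝕜 : Type*} [NontriviallyNormedField 𝕜] {c : 𝕜} (hc : c ≠ 0)
    (n : ℕ) (f : 𝕜 → 𝕜) (x : 𝕜) :
    deriv (rodrigues c n f) x = -c * rodrigues c (n + 1) f x := by
  unfold rodrigues
  rw [deriv_const_mul_field, ← iteratedDeriv_succ]
  field_simp
  ring

theorem stmt_15_general (r n : ℕ) (hr : 1 ≤ r) (β : ℝ) (Ln Ln1 : ℝ → ℝ)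
    (hLn : ∀ x : ℝ, 0 < x →
      x ^ β * Real.exp (-(x ^ r)) * Ln x
        = ((-1 : ℝ) ^ n / r ^ n) *
            iteratedDeriv n (fun t : ℝ => t ^ (β + n) * Real.exp (-(t ^ r))) x)
    (hLn1 : ∀ x : ℝ, 0 < x →
      x ^ (β - 1) * Real.exp (-(x ^ r)) * Ln1 x
        = ((-1 : ℝ) ^ (n + 1) / r ^ (n + 1)) *
            iteratedDeriv (n + 1)
              (fun t : ℝ => t ^ (β - 1 + (n + 1)) * Real.exp (-(t ^ r))) x) :
    ∀ x : ℝ, 0 < x →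
      deriv (fun t : ℝ => t ^ β * Real.exp (-(t ^ r)) * Ln t) x
        = -r * x ^ (β - 1) * Real.exp (-(x ^ r)) * Ln1 x := by
  intro x hx
  have hshift : β - 1 + ((n : ℝ) + 1) = β + n := by ring
  have hweighted : (fun t : ℝ => t ^ β * Real.exp (-(t ^ r)) * Ln t) =ᶠ[𝓝 x]
      rodrigues (r : ℝ) n (fun t => t ^ (β + n) * Real.exp (-(t ^ r))) := by
    filter_upwards [Ioi_mem_nhds hx] with t ht using hLn t ht
  have hr0 : (r : ℝ) ≠ 0 := by positivity
  rw [hweighted.deriv_eq, deriv_rodrigues hr0, mul_assoc, mul_assoc, ← mul_assoc (x ^ _),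
    hLn1 x hx, hshift]
  rfl

theorem stmt_15 (r n : ℕ) (hr : 1 ≤ r) (β : ℝ) (hβ : β > 0) (Ln Ln1 : ℝ → ℝ)
    (hLn : ∀ x : ℝ, 0 < x →
      x ^ β * Real.exp (-(x ^ r)) * Ln x
        = ((-1 : ℝ) ^ n / r ^ n) *
            iteratedDeriv n (fun t : ℝ => t ^ (β + n) * Real.exp (-(t ^ r))) x)
    (hLn1 : ∀ x : ℝ, 0 < x →
      x ^ (β - 1) * Real.exp (-(x ^ r)) * Ln1 x
        = ((-1 : ℝ) ^ (n + 1) / r ^ (n + 1)) *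
            iteratedDeriv (n + 1)
              (fun t : ℝ => t ^ (β - 1 + (n + 1)) * Real.exp (-(t ^ r))) x) :
    ∀ x : ℝ, 0 < x →
      deriv (fun t : ℝ => t ^ β * Real.exp (-(t ^ r)) * Ln t) x
        = -r * x ^ (β - 1) * Real.exp (-(x ^ r)) * Ln1 x :=
  stmt_15_general r n hr β Ln Ln1 hLn hLn1
end
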